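/- For each fixed k ∈ ℕ, the set of connected k-regular directed graphs (every vertex has in-degree plus out-degree equal to k) is generated by a bonding grammar. Specifically, with N = {I, O} of type 1, T = {b} of type 2, O ⊗ I = b, and start hypergraphs Z_j^{(k)} = &(I^j, O^{k-j}) for 0 ≤ j ≤ k (a single vertex with j hyperedges labelled I and k−j hyperedges labelled O attached), the grammar BG_reg^{(k)} generates exactly the connected directed graphs in which every vertex has total degree k. -/

import Mathlib

/-! ## Hypergraphs (over a label alphabet `Λ`), bonding, breaking bonds,
bonding grammars, following "Bonding Grammars" (Pshenitsyn). -/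

structure BHypergraph (Λ : Type) where
  V : Finset ℕ
  E : Finset ℕ
  att : ℕ → List ℕ
  lab : ℕ → Λ

namespace BHypergraph

variable {Λ : Type}

/-- Attachment vertices lie in `V` and attachment lengths agree with types. -/
def WellFormed (typ : Λ → ℕ) (H : BHypergraph Λ) : Prop :=
  (∀ e ∈ H.E, ∀ v ∈ H.att e, v ∈ H.V) ∧
  (∀ e ∈ H.E, (H.att e).length = typ (H.lab e))

def Adj (H : BHypergraph Λ) (u v : ℕ) : Prop :=
  ∃ e ∈ H.E, u ∈ H.att e ∧ v ∈ H.att e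

/-- There is a path between `u` and `v` in `H`. -/
def HasPath (H : BHypergraph Λ) (u v : ℕ) : Prop :=
  Relation.ReflTransGen H.Adj u v

def Connected (H : BHypergraph Λ) : Prop :=
  ∀ u ∈ H.V, ∀ v ∈ H.V, H.HasPath u v

/-- The degree of a vertex: the number of pairs `(e, i)` with
`att e ( i ) = v`, i.e. occurrences of `v` in attachment sequences. -/
def degree (H : BHypergraph Λ) (v : ℕ) : ℕ :=
  ∑ e ∈ H.E, (H.att e).count v

def degreeSet (H : BHypergraph Λ) : Set ℕ :=
  {d | ∃ v ∈ H.V, H.degree v = d}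

def Isomorphic (H G : BHypergraph Λ) : Prop :=
  ∃ f g : ℕ → ℕ,
    Set.BijOn f ↑H.V ↑G.V ∧ Set.BijOn g ↑H.E ↑G.E ∧
    ∀ e ∈ H.E, G.att (g e) = (H.att e).map f ∧ G.lab (g e) = H.lab e

end BHypergraph

/-- A single bonding step: two distinct hyperedges `e₁, e₂` whose labels can be
bonded are merged into a single new hyperedge `e'` with concatenated
attachment sequence and label `lab e₁ ⊗ lab e₂`. -/
def BondingStep {Λ : Type} (bond : Λ → Λ → Option Λ) (H H' : BHypergraph Λ) : Prop :=
  ∃ e₁ e₂ e' t,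
    e₁ ∈ H.E ∧ e₂ ∈ H.E ∧ e₁ ≠ e₂ ∧ e' ∉ H.E ∧
    bond (H.lab e₁) (H.lab e₂) = some t ∧
    H'.V = H.V ∧
    H'.E = (H.E \ {e₁, e₂}) ∪ {e'} ∧
    (∀ e ∈ H.E \ {e₁, e₂}, H'.att e = H.att e ∧ H'.lab e = H.lab e) ∧
    H'.att e' = H.att e₁ ++ H.att e₂ ∧
    H'.lab e' = t

/-- Breaking the bond `e'` (whose label is `A₁ ⊗ A₂`) of `H'`, introducing the
fresh hyperedges `e₁, e₂`, yields `H`. -/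
def BreakBondAt {Λ : Type} (typ : Λ → ℕ) (bond : Λ → Λ → Option Λ)
    (H' H : BHypergraph Λ) (e' e₁ e₂ : ℕ) : Prop :=
  ∃ A₁ A₂,
    e' ∈ H'.E ∧ e₁ ∉ H'.E ∧ e₂ ∉ H'.E ∧ e₁ ≠ e₂ ∧
    bond A₁ A₂ = some (H'.lab e') ∧
    H.V = H'.V ∧
    H.E = (H'.E \ {e'}) ∪ {e₁, e₂} ∧
    (∀ e ∈ H'.E \ {e'}, H.att e = H'.att e ∧ H.lab e = H'.lab e) ∧
    H.att e₁ = (H'.att e').take (typ A₁) ∧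
    H.att e₂ = (H'.att e').drop (typ A₁) ∧
    H.lab e₁ = A₁ ∧ H.lab e₂ = A₂

def BreakBond {Λ : Type} (typ : Λ → ℕ) (bond : Λ → Λ → Option Λ)
    (H' H : BHypergraph Λ) : Prop :=
  ∃ e' e₁ e₂, BreakBondAt typ bond H' H e' e₁ e₂

/-- `BreaksTo typ bond H l F`: starting from `H` and successively breaking the
bonds listed in `l` yields `F`. -/
def BreaksTo {Λ : Type} (typ : Λ → ℕ) (bond : Λ → Λ → Option Λ) :
    BHypergraph Λ → List ℕ → BHypergraph Λ → Prop
  | H, [], F => H = F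
  | H, e :: l, F => ∃ H₁ e₁ e₂, BreakBondAt typ bond H H₁ e e₁ e₂ ∧ BreaksTo typ bond H₁ l F

/-- `H` is a disjoint union of copies of hypergraphs from `Zs`
(this plays the role of `m · Z`). -/
def IsUnionOfCopies {Λ : Type} (Zs : Set (BHypergraph Λ)) (H : BHypergraph Λ) : Prop :=
  ∃ (n : ℕ) (cV cE : ℕ → ℕ),
    (∀ v ∈ H.V, cV v < n) ∧ (∀ e ∈ H.E, cE e < n) ∧
    (∀ e ∈ H.E, ∀ v ∈ H.att e, v ∈ H.V) ∧
    (∀ e ∈ H.E, ∀ v ∈ H.att e, cV v = cE e) ∧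
    ∀ i < n, ∃ Z0 ∈ Zs, BHypergraph.Isomorphic
      ⟨H.V.filter (fun v => cV v = i), H.E.filter (fun e => cE e = i), H.att, H.lab⟩ Z0

/-- `C` is a connected component of `H`. -/
def IsComponent {Λ : Type} (H C : BHypergraph Λ) : Prop :=
  C.V ⊆ H.V ∧ C.att = H.att ∧ C.lab = H.lab ∧ C.V.Nonempty ∧
  (∀ u ∈ C.V, ∀ v ∈ H.V, (H.HasPath u v ↔ v ∈ C.V)) ∧
  ∀ e, e ∈ C.E ↔ (e ∈ H.E ∧ ∃ v ∈ H.att e, v ∈ C.V)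

/-- Disjoint union of two hypergraphs (via an even/odd renaming). -/
def hsum {Λ : Type} (H K : BHypergraph Λ) : BHypergraph Λ :=
  ⟨H.V.image (fun v => 2 * v) ∪ K.V.image (fun v => 2 * v + 1),
   H.E.image (fun e => 2 * e) ∪ K.E.image (fun e => 2 * e + 1),
   fun e => if e % 2 = 0 then (H.att (e / 2)).map (fun v => 2 * v)
            else (K.att (e / 2)).map (fun v => 2 * v + 1),
   fun e => if e % 2 = 0 then H.lab (e / 2) else K.lab (e / 2)⟩

/-- A bonding grammar: typed labels, nonterminal and terminal alphabets, a
partial bond function, and a tuple `Z` of start hypergraphs. -/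
structure BondingGrammar (Λ : Type) where
  typ : Λ → ℕ
  N : Set Λ
  T : Set Λ
  bond : Λ → Λ → Option Λ
  k : ℕ
  Z : Fin k → BHypergraph Λ

namespace BondingGrammar

variable {Λ : Type}

/-- Side conditions from the definition of a bonding grammar: `N` and `T` are
disjoint, the start hypergraphs are connected and well-formed, and the bond
function is a partial injective function `N × N ⇀ T` adding the types. -/
def WellFormed (G : BondingGrammar Λ) : Prop :=
  Disjoint G.N G.T ∧
  (∀ i, (G.Z i).Connected ∧ (G.Z i).WellFormed G.typ) ∧
  (∀ A₁ A₂ t, G.bond A₁ A₂ = some t →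
    A₁ ∈ G.N ∧ A₂ ∈ G.N ∧ t ∈ G.T ∧ G.typ t = G.typ A₁ + G.typ A₂) ∧
  (∀ A₁ A₂ B₁ B₂ t, G.bond A₁ A₂ = some t → G.bond B₁ B₂ = some t →
    A₁ = B₁ ∧ A₂ = B₂)

def ZSet (G : BondingGrammar Λ) : Set (BHypergraph Λ) :=
  {Z0 | ∃ i, Z0 = G.Z i}

/-- `G` generates `H` if some `m · Z` derives `H` by bonding steps. -/
def Generates (G : BondingGrammar Λ) (H : BHypergraph Λ) : Prop :=
  ∃ H₀, IsUnionOfCopies G.ZSet H₀ ∧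
    Relation.ReflTransGen (BondingStep G.bond) H₀ H

/-- The language of `G`: generated hypergraphs all of whose labels are terminal. -/
def Lang (G : BondingGrammar Λ) : Set (BHypergraph Λ) :=
  {H | G.Generates H ∧ ∀ e ∈ H.E, H.lab e ∈ G.T}

end BondingGrammar

/-! Labels `I, O` (nonterminal, type 1) and `b` (terminal, type 2). -/

inductive Lab : Type
  | I | O | b
deriving DecidableEq

def typLab : Lab → ℕ
  | .I => 1 | .O => 1 | .b => 2

def bondLab : Lab → Lab → Option Lab
  | .O, .I => some .b
  | _, _ => none

/-- The hypergraph `&(I^j, O^(k-j))`: one vertex with `j` hyperedges labelled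
`I` and `k - j` hyperedges labelled `O` attached to it. -/
def Zreg (k j : ℕ) : BHypergraph Lab :=
  ⟨{0}, Finset.range k, fun _ => [0], fun e => if e < j then Lab.I else Lab.O⟩

/-- The bonding grammar `BG_reg^(k)` with start tuple `Z_0^(k), …, Z_k^(k)`. -/
def BGreg (k : ℕ) : BondingGrammar Lab :=
  { typ := typLab, N := {Lab.I, Lab.O}, T := {Lab.b}, bond := bondLab,
    k := k + 1, Z := fun j => Zreg k (j : ℕ) }

/-- The star graph with one center connected by a `b`-labelled edge to each of
`n` leaves. -/
def starGraph (n : ℕ) : BHypergraph Lab :=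
  ⟨Finset.range (n + 1), Finset.range n, fun e => [0, e + 1], fun _ => Lab.b⟩

/-! Bonding preserves the vertices, the degrees and well-formedness, and each start
hypergraph `Zreg k j` is a single well-formed vertex of degree `k`, so everything the grammar
generates is a well-formed `k`-regular hypergraph. Conversely, breaking every `b`-edge of a
`k`-regular directed graph `H` into an `O`-half at its source and an `I`-half at its target
leaves one star of `k` unary edges per vertex, i.e. a disjoint union of copies of the `Zreg k j`,
and bonding the halves back together derives `H`. -/

open Finset

theorem List.count_map_of_injOn {α β : Type*} [DecidableEq α] [DecidableEq β]
    {f : α → β} {s : Set α} {l : List α} (hl : ∀ x ∈ l, x ∈ s) (hf : Set.InjOn f s)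
    {a : α} (ha : a ∈ s) : (l.map f).count (f a) = l.count a := by
  induction l with
  | nil => rfl
  | cons x l ih =>
    have hx : f x = f a ↔ x = a := ⟨fun h => hf (hl x (by simp)) ha h, congrArg f⟩
    simp [List.count_cons, hx, ih fun y hy => hl y (List.mem_cons_of_mem x hy)]

theorem Finset.exists_bijOn_range {α : Type*} (s : Finset α) :
    ∃ r : α → ℕ, Set.BijOn r s (range #s) :=
  s.finite_toSet.exists_bijOn_of_encard_eq (by
    rw [Set.encard_coe_eq_coe_finsetCard, Set.encard_coe_eq_coe_finsetCard, card_range])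

theorem Finset.exists_bijOn_range_lt_iff {α : Type*} (s : Finset α) (p : α → Prop)
    [DecidablePred p] :
    ∃ g : α → ℕ, Set.BijOn g s (range #s) ∧ ∀ x ∈ s, (g x < #(s.filter p) ↔ p x) := by
  set j := #(s.filter p)
  have hcard : j + #(s.filter (¬ p ·)) = #s := card_filter_add_card_filter_not p
  obtain ⟨r₁, hr₁⟩ : ∃ r : α → ℕ, Set.BijOn r (s.filter p) (range j) :=
    (s.filter p).finite_toSet.exists_bijOn_of_encard_eq (by
      rw [Set.encard_coe_eq_coe_finsetCard, Set.encard_coe_eq_coe_finsetCard, card_range])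
  obtain ⟨r₂, hr₂⟩ : ∃ r : α → ℕ, Set.BijOn r (s.filter (¬ p ·)) (Ico j #s) :=
    (s.filter (¬ p ·)).finite_toSet.exists_bijOn_of_encard_eq (by
      rw [Set.encard_coe_eq_coe_finsetCard, Set.encard_coe_eq_coe_finsetCard, Nat.card_Ico]
      congr 1; omega)
  have hg₁ : ∀ x ∈ s, p x → r₁ x < j := fun x hx hp => by
    simpa using hr₁.mapsTo (by simpa using ⟨hx, hp⟩)
  have hg₂ : ∀ x ∈ s, ¬ p x → j ≤ r₂ x ∧ r₂ x < #s := fun x hx hp => by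
    simpa using hr₂.mapsTo (by simpa using ⟨hx, hp⟩)
  refine ⟨fun x => if p x then r₁ x else r₂ x, ⟨fun x hx => ?_, fun x hx y hy hxy => ?_,
    fun y hy => ?_⟩, fun x hx => ?_⟩
  · rw [mem_coe] at hx
    rw [coe_range, Set.mem_Iio]
    by_cases hpx : p x
    · simp only [hpx, if_true]; have := hg₁ x hx hpx; omega
    · simp only [hpx, if_false]; exact (hg₂ x hx hpx).2
  · rw [mem_coe] at hx hy
    have hx₁ := hg₁ x hx; have hx₂ := hg₂ x hx; have hy₁ := hg₁ y hy; have hy₂ := hg₂ y hy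
    dsimp only at hxy
    split_ifs at hxy with hpx hpy hpy
    · exact hr₁.injOn (by simpa using ⟨hx, hpx⟩) (by simpa using ⟨hy, hpy⟩) hxy
    · have := hx₁ hpx; have := hy₂ hpy; omega
    · have := hx₂ hpx; have := hy₁ hpy; omega
    · exact hr₂.injOn (by simpa using ⟨hx, hpx⟩) (by simpa using ⟨hy, hpy⟩) hxy
  · rw [coe_range, Set.mem_Iio] at hy
    by_cases hyj : y < j
    · obtain ⟨x, hx, rfl⟩ := hr₁.surjOn (by simpa using hyj)
      rw [coe_filter] at hx
      exact ⟨x, hx.1, if_pos hx.2⟩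
    · have hy' : y ∈ ((Ico j #s : Finset ℕ) : Set ℕ) := by
        rw [coe_Ico, Set.mem_Ico]; omega
      obtain ⟨x, hx, rfl⟩ := hr₂.surjOn hy'
      rw [coe_filter] at hx
      exact ⟨x, hx.1, if_neg hx.2⟩
  · by_cases hpx : p x
    · simp only [hpx, if_true, iff_true]; exact hg₁ x hx hpx
    · simp only [hpx, if_false, iff_false, not_lt]; exact (hg₂ x hx hpx).1

namespace BHypergraph

variable {Λ : Type}

def star (H : BHypergraph Λ) (v : ℕ) : BHypergraph Λ :=
  ⟨{v}, H.E.filter (H.att · = [v]), H.att, H.lab⟩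

def edgeBound (H : BHypergraph Λ) : ℕ := H.E.sup id + 1

theorem lt_edgeBound {H : BHypergraph Λ} {e : ℕ} (he : e ∈ H.E) : e < H.edgeBound :=
  Nat.lt_succ_of_le (le_sup (f := id) he)

theorem Isomorphic.wellFormed {typ : Λ → ℕ} {H G : BHypergraph Λ} (h : H.Isomorphic G)
    (hG : G.WellFormed typ) (hH : ∀ e ∈ H.E, ∀ v ∈ H.att e, v ∈ H.V) :
    H.WellFormed typ := by
  obtain ⟨f, g, -, hg, hatt⟩ := h
  refine ⟨hH, fun e he => ?_⟩
  rw [← (hatt e he).2, ← hG.2 (g e) (hg.mapsTo he), (hatt e he).1, List.length_map]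

theorem Isomorphic.exists_degree_eq {H G : BHypergraph Λ} (h : H.Isomorphic G)
    (hH : ∀ e ∈ H.E, ∀ v ∈ H.att e, v ∈ H.V) {v : ℕ} (hv : v ∈ H.V) :
    ∃ w ∈ G.V, G.degree w = H.degree v := by
  obtain ⟨f, g, hf, hg, hatt⟩ := h
  refine ⟨f v, hf.mapsTo hv, ?_⟩
  calc G.degree (f v) = ∑ e ∈ H.E, (G.att (g e)).count (f v) :=
        (sum_nbij g hg.mapsTo hg.injOn hg.surjOn fun _ _ => rfl).symm
    _ = H.degree v := sum_congr rfl fun e he => by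
        rw [(hatt e he).1, List.count_map_of_injOn (hH e he) hf.injOn hv]

theorem degree_eq_card_star {H : BHypergraph Λ} (hH : ∀ e ∈ H.E, ∃ u, H.att e = [u])
    (v : ℕ) : H.degree v = #(H.star v).E := by
  rw [degree, star, card_filter]
  refine sum_congr rfl fun e he => ?_
  obtain ⟨u, hu⟩ := hH e he
  simp [hu, List.count_singleton]

end BHypergraph

section Bonding

variable {Λ : Type} {bond : Λ → Λ → Option Λ} {H H' : BHypergraph Λ}

theorem BondingStep.degree_eq (h : BondingStep bond H H') (v : ℕ) :
    H'.degree v = H.degree v := by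
  obtain ⟨e₁, e₂, e', t, he₁, he₂, hne, he', -, -, hE, hkeep, hatt', -⟩ := h
  have hpair : {e₁, e₂} ⊆ H.E := insert_subset he₁ (singleton_subset_iff.2 he₂)
  have hnew : e' ∉ H.E \ {e₁, e₂} := fun hx => he' (mem_sdiff.1 hx).1
  rw [BHypergraph.degree, hE, union_comm, ← insert_eq, sum_insert hnew, hatt',
    List.count_append, sum_congr rfl fun e he => by rw [(hkeep e he).1],
    BHypergraph.degree, ← sum_sdiff hpair, sum_pair hne]
  ring

theorem BondingStep.wellFormed {typ : Λ → ℕ}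
    (hbond : ∀ A₁ A₂ t, bond A₁ A₂ = some t → typ t = typ A₁ + typ A₂)
    (h : BondingStep bond H H') (hH : H.WellFormed typ) : H'.WellFormed typ := by
  obtain ⟨e₁, e₂, e', t, he₁, he₂, -, -, hb, hV, hE, hkeep, hatt', hlab'⟩ := h
  rw [union_comm, ← insert_eq] at hE
  refine ⟨fun e he v hv => ?_, fun e he => ?_⟩ <;> rw [hE] at he <;>
    rcases mem_insert.1 he with rfl | he
  · rw [hatt', List.mem_append] at hv
    rw [hV]
    exact hv.elim (hH.1 _ he₁ v) (hH.1 _ he₂ v)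
  · rw [(hkeep e he).1] at hv
    exact hV ▸ hH.1 e (mem_sdiff.1 he).1 v hv
  · rw [hatt', hlab', List.length_append, hH.2 _ he₁, hH.2 _ he₂, hbond _ _ _ hb]
  · rw [(hkeep e he).1, (hkeep e he).2]
    exact hH.2 e (mem_sdiff.1 he).1

theorem BondingStep.V_eq (h : BondingStep bond H H') : H'.V = H.V := by
  obtain ⟨-, -, -, -, -, -, -, -, -, hV, -⟩ := h
  exact hV

theorem BondingStep.reflTransGen_V_eq (h : Relation.ReflTransGen (BondingStep bond) H H') :
    H'.V = H.V := by
  induction h with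
  | refl => rfl
  | tail _ hstep ih => exact hstep.V_eq.trans ih

theorem BondingStep.reflTransGen_degree_eq
    (h : Relation.ReflTransGen (BondingStep bond) H H') (v : ℕ) :
    H'.degree v = H.degree v := by
  induction h with
  | refl => rfl
  | tail _ hstep ih => exact (hstep.degree_eq v).trans ih

theorem BondingStep.reflTransGen_wellFormed {typ : Λ → ℕ}
    (hbond : ∀ A₁ A₂ t, bond A₁ A₂ = some t → typ t = typ A₁ + typ A₂)
    (h : Relation.ReflTransGen (BondingStep bond) H H') (hH : H.WellFormed typ) :
    H'.WellFormed typ := by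
  induction h with
  | refl => exact hH
  | tail _ hstep ih => exact hstep.wellFormed hbond ih

end Bonding

section UnionOfCopies

variable {Λ : Type} {Zs : Set (BHypergraph Λ)} {H : BHypergraph Λ}

theorem IsUnionOfCopies.wellFormed {typ : Λ → ℕ} (h : IsUnionOfCopies Zs H)
    (hZs : ∀ Z ∈ Zs, Z.WellFormed typ) : H.WellFormed typ := by
  obtain ⟨n, cV, cE, -, hcE, hattV, hc, hcopy⟩ := h
  refine ⟨hattV, fun e he => ?_⟩
  obtain ⟨Z, hZ, hiso⟩ := hcopy (cE e) (hcE e he)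
  refine (hiso.wellFormed (hZs Z hZ) fun e' he' u hu => ?_).2 e (by simp [he])
  rw [mem_filter] at he' ⊢
  exact ⟨hattV e' he'.1 u hu, (hc e' he'.1 u hu).trans he'.2⟩

theorem IsUnionOfCopies.exists_degree_eq (h : IsUnionOfCopies Zs H) {v : ℕ} (hv : v ∈ H.V) :
    ∃ Z ∈ Zs, ∃ w ∈ Z.V, Z.degree w = H.degree v := by
  obtain ⟨n, cV, cE, hcV, -, hattV, hc, hcopy⟩ := h
  obtain ⟨Z, hZ, hiso⟩ := hcopy (cV v) (hcV v hv)
  obtain ⟨w, hw, hdeg⟩ := hiso.exists_degree_eq (fun e he u hu => by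
    rw [mem_filter] at he ⊢
    exact ⟨hattV e he.1 u hu, (hc e he.1 u hu).trans he.2⟩) (mem_filter.2 ⟨hv, rfl⟩)
  refine ⟨Z, hZ, w, hw, hdeg.trans (sum_filter_of_ne fun e he hne => ?_)⟩
  exact (hc e he v (List.count_pos_iff.1 (Nat.pos_of_ne_zero hne))).symm

theorem isUnionOfCopies_of_isomorphic_star (hatt : ∀ e ∈ H.E, ∃ v ∈ H.V, H.att e = [v])
    (hstar : ∀ v ∈ H.V, ∃ Z ∈ Zs, (H.star v).Isomorphic Z) : IsUnionOfCopies Zs H := by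
  obtain ⟨r, hr⟩ := H.V.exists_bijOn_range
  have hr_eq : ∀ u ∈ H.V, ∀ v ∈ H.V, r u = r v ↔ u = v :=
    fun u hu v hv => ⟨fun h => hr.injOn hu hv h, congrArg r⟩
  refine ⟨#H.V, r, fun e => r (H.att e).headI, fun v hv => by simpa using hr.mapsTo hv,
    fun e he => ?_, fun e he u hu => ?_, fun e he u hu => ?_, fun i hi => ?_⟩
  · obtain ⟨v, hv, hav⟩ := hatt e he
    simpa [hav] using hr.mapsTo hv
  · obtain ⟨v, hv, hav⟩ := hatt e he
    rw [hav, List.mem_singleton] at hu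
    exact hu ▸ hv
  · obtain ⟨v, hv, hav⟩ := hatt e he
    rw [hav, List.mem_singleton] at hu
    show r u = r (H.att e).headI
    rw [hav, hu, List.headI_cons]
  · obtain ⟨v, hv, rfl⟩ := hr.surjOn (by simpa using hi)
    have hcopy : (⟨H.V.filter (r · = r v), H.E.filter (fun e => r (H.att e).headI = r v),
        H.att, H.lab⟩ : BHypergraph Λ) = H.star v := by
      rw [BHypergraph.star, BHypergraph.mk.injEq]
      refine ⟨?_, filter_congr fun e he => ?_, rfl, rfl⟩
      · ext u
        rw [mem_filter, mem_singleton]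
        exact ⟨fun hu => (hr_eq u hu.1 v hv).1 hu.2, by rintro rfl; exact ⟨hv, rfl⟩⟩
      · obtain ⟨u, hu, hau⟩ := hatt e he
        rw [hau, List.headI_cons, hr_eq u hu v hv, List.singleton_inj]
    rw [hcopy]
    exact hstar v hv

end UnionOfCopies

theorem typLab_of_bondLab_eq_some {A₁ A₂ t : Lab} (h : bondLab A₁ A₂ = some t) :
    typLab t = typLab A₁ + typLab A₂ := by
  cases A₁ <;> cases A₂ <;> cases h; rfl

theorem Zreg_wellFormed (k j : ℕ) : (Zreg k j).WellFormed typLab :=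
  ⟨fun _ _ _ hv => hv, fun e _ => by
    show 1 = typLab (if e < j then Lab.I else Lab.O)
    split_ifs <;> rfl⟩

theorem Zreg_degree {k j w : ℕ} (hw : w ∈ (Zreg k j).V) : (Zreg k j).degree w = k := by
  rw [mem_singleton.1 hw]
  simp [BHypergraph.degree, Zreg]

theorem exists_isomorphic_BGreg_Z {H : BHypergraph Lab} {v : ℕ} (hV : H.V = {v})
    (hE : ∀ e ∈ H.E, H.att e = [v] ∧ (H.lab e = Lab.I ∨ H.lab e = Lab.O)) :
    ∃ Z ∈ (BGreg #H.E).ZSet, H.Isomorphic Z := by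
  obtain ⟨g, hg, hgI⟩ := H.E.exists_bijOn_range_lt_iff (H.lab · = Lab.I)
  set j := #(H.E.filter (H.lab · = Lab.I))
  refine ⟨Zreg #H.E j, ⟨⟨j, Nat.lt_succ_of_le (card_filter_le _ _)⟩, rfl⟩,
    fun _ => 0, g, by simp [hV, Zreg], hg, fun e he => ⟨by simp [Zreg, (hE e he).1], ?_⟩⟩
  show (if g e < j then Lab.I else Lab.O) = H.lab e
  split_ifs with hlt
  · exact ((hgI e he).1 hlt).symm
  · exact ((hE e he).2.resolve_left fun h => hlt ((hgI e he).2 h)).symm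

namespace BHypergraph

variable {H : BHypergraph Lab} {S : Finset ℕ} {e x : ℕ}

def outHalf (H : BHypergraph Lab) (f : ℕ) : ℕ := 2 * (H.edgeBound + f)

def inHalf (H : BHypergraph Lab) (f : ℕ) : ℕ := 2 * (H.edgeBound + f) + 1

/-- `H` with every edge `f ∈ S` broken into an `O`-labelled half `outHalf H f` carrying the
first attachment and an `I`-labelled half `inHalf H f` carrying the rest; a half `x` is
recognised by `edgeBound ≤ x / 2` and belongs to the edge `x / 2 - edgeBound`. -/
def split (H : BHypergraph Lab) (S : Finset ℕ) : BHypergraph Lab where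
  V := H.V
  E := (H.E \ S) ∪ S.image H.outHalf ∪ S.image H.inHalf
  att x :=
    if H.edgeBound ≤ x / 2 ∧ x / 2 - H.edgeBound ∈ S then
      if x % 2 = 0 then (H.att (x / 2 - H.edgeBound)).take 1
      else (H.att (x / 2 - H.edgeBound)).drop 1
    else H.att x
  lab x :=
    if H.edgeBound ≤ x / 2 ∧ x / 2 - H.edgeBound ∈ S then
      if x % 2 = 0 then Lab.O else Lab.I
    else H.lab x

theorem split_E_eq (hS : S ⊆ H.E) (he : e ∈ S) :
    (H.split (S.erase e)).E = ((H.split S).E \ {H.outHalf e, H.inHalf e}) ∪ {e} := by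
  have hbound : ∀ f ∈ H.E, f < H.edgeBound := fun f hf => lt_edgeBound hf
  ext x
  simp only [split, mem_union, mem_sdiff, mem_image, mem_erase, mem_insert, mem_singleton,
    outHalf, inHalf]
  grind

theorem split_att_outHalf (hf : e ∈ S) : (H.split S).att (H.outHalf e) = (H.att e).take 1 := by
  simp [split, outHalf, hf, Nat.mul_mod_right]

theorem split_att_inHalf (hf : e ∈ S) : (H.split S).att (H.inHalf e) = (H.att e).drop 1 := by
  have h₁ : (2 * (H.edgeBound + e) + 1) / 2 = H.edgeBound + e := by omega
  have h₂ : (2 * (H.edgeBound + e) + 1) % 2 = 1 := by omega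
  simp [split, inHalf, hf, h₁, h₂]

theorem split_lab_outHalf (hf : e ∈ S) : (H.split S).lab (H.outHalf e) = Lab.O := by
  simp [split, outHalf, hf, Nat.mul_mod_right]

theorem split_lab_inHalf (hf : e ∈ S) : (H.split S).lab (H.inHalf e) = Lab.I := by
  have h₁ : (2 * (H.edgeBound + e) + 1) / 2 = H.edgeBound + e := by omega
  have h₂ : (2 * (H.edgeBound + e) + 1) % 2 = 1 := by omega
  simp [split, inHalf, hf, h₁, h₂]

theorem split_att_of_mem (hx : x ∈ H.E) : (H.split S).att x = H.att x := by
  have := lt_edgeBound hx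
  dsimp only [split]
  rw [if_neg (by omega)]

theorem split_lab_of_mem (hx : x ∈ H.E) : (H.split S).lab x = H.lab x := by
  have := lt_edgeBound hx
  dsimp only [split]
  rw [if_neg (by omega)]

theorem split_erase_att (hx₁ : x ≠ H.outHalf e) (hx₂ : x ≠ H.inHalf e) :
    (H.split (S.erase e)).att x = (H.split S).att x := by
  have : x / 2 - H.edgeBound = e → ¬ H.edgeBound ≤ x / 2 := by
    simp only [outHalf, inHalf] at hx₁ hx₂; omega
  simp only [split, mem_erase]
  grind

theorem split_erase_lab (hx₁ : x ≠ H.outHalf e) (hx₂ : x ≠ H.inHalf e) :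
    (H.split (S.erase e)).lab x = (H.split S).lab x := by
  have : x / 2 - H.edgeBound = e → ¬ H.edgeBound ≤ x / 2 := by
    simp only [outHalf, inHalf] at hx₁ hx₂; omega
  simp only [split, mem_erase]
  grind

theorem split_empty (H : BHypergraph Lab) : H.split ∅ = H := by
  simp [split]

theorem bondingStep_split_erase (hS : S ⊆ H.E) (he : e ∈ S) (hlab : H.lab e = Lab.b) :
    BondingStep bondLab (H.split S) (H.split (S.erase e)) := by
  have hbound : ∀ f ∈ H.E, f < H.edgeBound := fun f hf => lt_edgeBound hf
  have heE := hS he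
  refine ⟨H.outHalf e, H.inHalf e, e, Lab.b, ?_, ?_, ?_, ?_, ?_, rfl, split_E_eq hS he,
    fun x hx => ?_, ?_, ?_⟩
  · exact mem_union_left _ (mem_union_right _ (mem_image_of_mem _ he))
  · exact mem_union_right _ (mem_image_of_mem _ he)
  · simp only [outHalf, inHalf]; omega
  · simp only [split, mem_union, mem_sdiff, mem_image, outHalf, inHalf]
    grind
  · rw [split_lab_outHalf he, split_lab_inHalf he]; rfl
  · simp only [mem_sdiff, mem_insert, mem_singleton, not_or] at hx
    exact ⟨split_erase_att hx.2.1 hx.2.2, split_erase_lab hx.2.1 hx.2.2⟩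
  · rw [split_att_of_mem heE, split_att_outHalf he, split_att_inHalf he, List.take_append_drop]
  · rw [split_lab_of_mem heE, hlab]

theorem split_reflTransGen (hS : S ⊆ H.E) (hlab : ∀ e ∈ S, H.lab e = Lab.b) :
    Relation.ReflTransGen (BondingStep bondLab) (H.split S) H := by
  induction S using Finset.induction_on with
  | empty => rw [split_empty]
  | insert e S heS ih =>
    have hstep := bondingStep_split_erase hS (mem_insert_self e S) (hlab e (mem_insert_self e S))
    rw [erase_insert heS] at hstep
    exact .head hstep (ih ((subset_insert e S).trans hS) fun f hf => hlab f (mem_insert_of_mem hf))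

theorem split_self_att_eq_singleton (hWF : H.WellFormed typLab)
    (hlab : ∀ e ∈ H.E, H.lab e = Lab.b) {x : ℕ} (hx : x ∈ (H.split H.E).E) :
    ∃ v ∈ H.V, (H.split H.E).att x = [v] ∧
      ((H.split H.E).lab x = Lab.I ∨ (H.split H.E).lab x = Lab.O) := by
  simp only [split, Finset.sdiff_self, empty_union, mem_union, mem_image] at hx
  rcases hx with ⟨f, hf, rfl⟩ | ⟨f, hf, rfl⟩
  all_goals
    obtain ⟨u, w, huw⟩ := List.length_eq_two.1 ((hWF.2 f hf).trans (by rw [hlab f hf]; rfl))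
    have hu : u ∈ H.V := hWF.1 f hf u (by simp [huw])
    have hw : w ∈ H.V := hWF.1 f hf w (by simp [huw])
  · exact ⟨u, hu, by simp [split_att_outHalf hf, huw], .inr (split_lab_outHalf hf)⟩
  · exact ⟨w, hw, by simp [split_att_inHalf hf, huw], .inl (split_lab_inHalf hf)⟩

theorem isUnionOfCopies_split {k : ℕ} (hWF : H.WellFormed typLab)
    (hlab : ∀ e ∈ H.E, H.lab e = Lab.b) (hdeg : ∀ v ∈ H.V, H.degree v = k) :
    IsUnionOfCopies (BGreg k).ZSet (H.split H.E) := by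
  have hunary := fun x (hx : x ∈ (H.split H.E).E) => split_self_att_eq_singleton hWF hlab hx
  refine isUnionOfCopies_of_isomorphic_star (fun x hx => ?_) fun v hv => ?_
  · obtain ⟨v, hv, hxv, -⟩ := hunary x hx
    exact ⟨v, hv, hxv⟩
  · have hk : #((H.split H.E).star v).E = k := by
      rw [← degree_eq_card_star fun x hx => (hunary x hx).imp fun _ h => h.2.1,
        ← BondingStep.reflTransGen_degree_eq (split_reflTransGen subset_rfl hlab), hdeg v hv]
    rw [← hk]
    refine exists_isomorphic_BGreg_Z rfl fun x hx => ?_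
    obtain ⟨hx, hxv⟩ := mem_filter.1 hx
    obtain ⟨-, -, -, hlabx⟩ := hunary x hx
    exact ⟨hxv, hlabx⟩

end BHypergraph

/-- the grammar `BG_reg^(k)` generates exactly the connected
`k`-regular directed graphs (every vertex has in-degree plus out-degree `k`). -/
theorem BGreg_generates_k_regular (k : ℕ) (H : BHypergraph Lab) :
    (H ∈ BondingGrammar.Lang (BGreg k) ∧ H.Connected) ↔
    (H.WellFormed typLab ∧ (∀ e ∈ H.E, H.lab e = Lab.b) ∧ H.Connected ∧
      ∀ v ∈ H.V, H.degree v = k) := by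
  constructor
  · rintro ⟨⟨⟨H₀, hcopies, hderiv⟩, hT⟩, hconn⟩
    have hWF₀ : H₀.WellFormed typLab :=
      hcopies.wellFormed fun _ ⟨j, hj⟩ => hj ▸ Zreg_wellFormed k j
    refine ⟨BondingStep.reflTransGen_wellFormed (fun _ _ _ => typLab_of_bondLab_eq_some)
      hderiv hWF₀, hT, hconn, fun v hv => ?_⟩
    obtain ⟨_, ⟨j, rfl⟩, w, hw, hdeg⟩ :=
      hcopies.exists_degree_eq (BondingStep.reflTransGen_V_eq hderiv ▸ hv)
    rw [BondingStep.reflTransGen_degree_eq hderiv, ← hdeg]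
    exact Zreg_degree hw
  · rintro ⟨hWF, hlab, hconn, hdeg⟩
    refine ⟨⟨⟨H.split H.E, BHypergraph.isUnionOfCopies_split hWF hlab hdeg,
      BHypergraph.split_reflTransGen subset_rfl hlab⟩, fun e he => by rw [hlab e he]; rfl⟩, hconn⟩
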